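/- arXiv:0806.3700 — 2 statements merged into one kernel-verified Lean document; each statement's English description precedes it below -/
import Mathlib

section
/- Let p > 2 be an odd prime and let Z ⊂ ℂ² be the zero set of z^p − w². Then |w| ≤ |z|^⌊p/2⌋ holds for all (z,w) ∈ Z in a neighborhood of the origin, but w does not belong to the ideal generated by z in the local ring 𝒪_Z = 𝒪_{ℂ²,0}/(z^p − w²). -/
open Filter Topology

/-- On the germ at `0` of the singular curve `Z = {z^p = w²} ⊂ ℂ²` (`p > 2` prime), one has
`|w| ≤ |z|^⌊p/2⌋` near the origin, but `w` does not belong to the ideal generated by `z`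
in `𝒪_Z = 𝒪_{ℂ²,0}/(z^p − w²)`: there are no germs `h, g`, holomorphic at `0`, with
`w − z·h = (z^p − w²)·g` near `0`. -/
theorem cusp_example (p : ℕ) (hp : p.Prime) (hp2 : 2 < p) :
    (∃ U ∈ 𝓝 (0 : ℂ × ℂ), ∀ q ∈ U, q.1 ^ p = q.2 ^ 2 → ‖q.2‖ ≤ ‖q.1‖ ^ (p / 2)) ∧
    ¬ ∃ (h g : ℂ × ℂ → ℂ), AnalyticAt ℂ h 0 ∧ AnalyticAt ℂ g 0 ∧
        ∀ᶠ q in 𝓝 (0 : ℂ × ℂ), q.2 - q.1 * h q = (q.1 ^ p - q.2 ^ 2) * g q := by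
  constructor
  · refine ⟨{q : ℂ × ℂ | ‖q.1‖ < 1}, ?_, ?_⟩
    · exact (isOpen_lt (continuous_norm.comp continuous_fst) continuous_const).mem_nhds
        (by simp)
    · rintro q hq hzw
      have hq1 : (0:ℝ) ≤ ‖q.1‖ := norm_nonneg _
      have hodd : p = 2 * (p / 2) + 1 := by
        obtain ⟨k, hk⟩ := hp.odd_of_ne_two (by omega)
        omega
      have h2 : ‖q.2‖ ^ 2 = ‖q.1‖ ^ p := by
        rw [← norm_pow, ← norm_pow, hzw]
      rw [← pow_le_pow_iff_left₀ (norm_nonneg _) (pow_nonneg hq1 _) (two_ne_zero), h2,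
        ← pow_mul]
      calc ‖q.1‖ ^ p = ‖q.1‖ ^ (p / 2 * 2) * ‖q.1‖ := by
            conv_lhs => rw [hodd, mul_comm 2 (p / 2), pow_succ]
        _ ≤ ‖q.1‖ ^ (p / 2 * 2) * 1 :=
            mul_le_mul_of_nonneg_left (le_of_lt hq) (pow_nonneg hq1 _)
        _ = ‖q.1‖ ^ (p / 2 * 2) := mul_one _
  · rintro ⟨h, g, hh, hg, heq⟩
    obtain ⟨K, s, hs, hK⟩ := (hh.contDiffAt (n := 1)).exists_lipschitzOnWith
    obtain ⟨V, hV, hVeq⟩ := heq.exists_mem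
    set a : ℝ → ℂ × ℂ := fun t => (((t:ℂ))^2, ((t:ℂ))^p) with ha
    set b : ℝ → ℂ × ℂ := fun t => (((t:ℂ))^2, -((t:ℂ))^p) with hb
    have hca : Continuous a := by fun_prop
    have hcb : Continuous b := by fun_prop
    have ha0 : Tendsto a (𝓝 0) (𝓝 0) := by
      simpa [ha, zero_pow hp.ne_zero, Prod.mk_zero_zero] using hca.tendsto 0
    have hb0 : Tendsto b (𝓝 0) (𝓝 0) := by
      simpa [hb, zero_pow hp.ne_zero, Prod.mk_zero_zero] using hcb.tendsto 0
    have hmem : ∀ᶠ y in 𝓝 (0 : ℂ × ℂ), y ∈ V ∩ s := inter_mem hV hs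
    have hW : ∀ᶠ t in 𝓝[>] (0:ℝ), a t ∈ V ∩ s ∧ b t ∈ V ∩ s :=
      nhdsWithin_le_nhds ((ha0.eventually hmem).and (hb0.eventually hmem))
    have key : ∀ᶠ t in 𝓝[>] (0:ℝ), (1:ℝ) ≤ K * t ^ 2 := by
      filter_upwards [hW, self_mem_nhdsWithin] with t ⟨⟨haV, has⟩, hbV, hbs⟩ ht
      have ht0 : (0:ℝ) < t := ht
      have nt : ‖((t:ℝ):ℂ)‖ = t := by
        rw [Complex.norm_real, Real.norm_eq_abs, abs_of_pos ht0]
      have e1 : ((t:ℂ))^p = ((t:ℂ))^2 * h (a t) := by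
        have := hVeq _ haV
        simp only [ha, ← pow_mul, mul_comm 2 p, sub_self, zero_mul, sub_eq_zero] at this
        exact this
      have e2 : -((t:ℂ))^p = ((t:ℂ))^2 * h (b t) := by
        have := hVeq _ hbV
        simp only [hb, ← pow_mul, mul_comm 2 p, neg_sq, sub_self, zero_mul,
          sub_eq_zero] at this
        exact this
      have e3 : (2:ℂ) * (t:ℂ)^p = (t:ℂ)^2 * (h (a t) - h (b t)) := by
        linear_combination e1 - e2
      have hnorm : 2 * t^p = t^2 * ‖h (a t) - h (b t)‖ := by
        have := congrArg norm e3
        simpa [norm_mul, norm_pow, nt, abs_of_pos ht0] using this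
      have hdist : dist (a t) (b t) = 2 * t ^ p := by
        rw [Prod.dist_eq]
        simp only [ha, hb, dist_self, dist_eq_norm, sub_neg_eq_add]
        rw [max_eq_right (by positivity)]
        have : ((t:ℂ))^p + ((t:ℂ))^p = 2 * (t:ℂ)^p := by ring
        rw [this]
        simp [norm_mul, norm_pow, nt, abs_of_pos ht0]
      have hlip : ‖h (a t) - h (b t)‖ ≤ K * (2 * t ^ p) := by
        have := hK.dist_le_mul _ has _ hbs
        rwa [hdist, dist_eq_norm] at this
      have htp : (0:ℝ) < t ^ p := by positivity
      nlinarith [mul_le_mul_of_nonneg_left hlip (by positivity : (0:ℝ) ≤ t^2)]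
    have hto : Tendsto (fun t : ℝ => (K:ℝ) * t ^ 2) (𝓝[>] 0) (𝓝 0) := by
      have hc : Continuous fun t : ℝ => (K:ℝ) * t ^ 2 := by fun_prop
      simpa using (hc.tendsto 0).mono_left nhdsWithin_le_nhds
    have hsmall : ∀ᶠ t in 𝓝[>] (0:ℝ), (K:ℝ) * t ^ 2 < 1 :=
      hto.eventually (Filter.Tendsto.eventually_lt_const one_pos tendsto_id)
    obtain ⟨t, h1, h2⟩ := (key.and hsmall).exists
    linarith
end

section
/- In the ring A = ℂ[z,w]/(z^p − w²) with p > 2 an odd prime, the element w is integral over the ideal (z)^⌊p/2⌋ (indeed w² = z^p ∈ (z)^(2⌊p/2⌋+1) ⊆ ((z)^⌊p/2⌋)²), hence w lies in the integral closure of (z)^⌊p/2⌋, yet w ∉ (z). -/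
/-- Integral closure of an ideal: elements satisfying a monic equation
`x^n + c₁ x^(n-1) + ⋯ + c_n = 0` with `cⱼ ∈ I^j`. -/
def intClosure {R : Type*} [CommRing R] (I : Ideal R) : Set R :=
  {x | ∃ n : ℕ, 0 < n ∧ ∃ c : ℕ → R, (∀ j, 1 ≤ j → j ≤ n → c j ∈ I ^ j) ∧
    x ^ n + ∑ j ∈ Finset.Icc 1 n, c j * x ^ (n - j) = 0}

open MvPolynomial
set_option maxHeartbeats 1000000
set_option synthInstance.maxHeartbeats 400000

/-- In `A = ℂ[z,w]/(z^p − w²)` with `p > 2` prime: `w² = z^p`, `z^p ∈ ((z)^⌊p/2⌋)²`,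
hence `w` lies in the integral closure of `(z)^⌊p/2⌋`, yet `w ∉ (z)`. -/
theorem cusp_algebraic_example (p : ℕ) (hp : p.Prime) (hp2 : 2 < p) :
    let A := MvPolynomial (Fin 2) ℂ ⧸
      Ideal.span {(X 0 : MvPolynomial (Fin 2) ℂ) ^ p - X 1 ^ 2}
    let z : A := Ideal.Quotient.mk _ (X 0)
    let w : A := Ideal.Quotient.mk _ (X 1)
    w ^ 2 = z ^ p ∧
    z ^ p ∈ ((Ideal.span {z}) ^ (p / 2)) ^ 2 ∧
    w ∈ intClosure ((Ideal.span {z}) ^ (p / 2)) ∧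
    w ∉ Ideal.span {z} := by
  intro A z w
  have hodd : p % 2 = 1 := Nat.odd_iff.mp (hp.odd_of_ne_two (by omega))
  have h1 : w ^ 2 = z ^ p := by
    have key : Ideal.Quotient.mk (Ideal.span {(X 0 : MvPolynomial (Fin 2) ℂ) ^ p - X 1 ^ 2})
        ((X 0 : MvPolynomial (Fin 2) ℂ) ^ p - X 1 ^ 2) = 0 :=
      Ideal.Quotient.eq_zero_iff_mem.mpr (Ideal.subset_span rfl)
    rw [map_sub, map_pow, map_pow] at key
    have key' : z ^ p - w ^ 2 = 0 := key
    linear_combination -key'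
  have h2 : z ^ p ∈ ((Ideal.span {z}) ^ (p / 2)) ^ 2 := by
    rw [Ideal.span_singleton_pow, Ideal.span_singleton_pow, Ideal.mem_span_singleton]
    exact ⟨z, by rw [← pow_mul, ← pow_succ]; congr 1; omega⟩
  refine ⟨h1, h2, ?_, ?_⟩
  · refine ⟨2, by norm_num, fun j => if j = 2 then -(z ^ p) else 0, ?_, ?_⟩
    · intro j hj1 hj2
      interval_cases j
      · simp
      · simpa using neg_mem h2
    · have : Finset.Icc 1 2 = {1, 2} := rfl
      rw [this]
      simp [h1]
  · intro hw
    rw [Ideal.mem_span_singleton] at hw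
    obtain ⟨c, hc⟩ := hw
    obtain ⟨C, rfl⟩ := Ideal.Quotient.mk_surjective c
    have hmem : (X 1 : MvPolynomial (Fin 2) ℂ) - X 0 * C ∈
        Ideal.span {(X 0 : MvPolynomial (Fin 2) ℂ) ^ p - X 1 ^ 2} := by
      rw [← Ideal.Quotient.eq_zero_iff_mem, map_sub, map_mul]
      rw [show Ideal.Quotient.mk _ (X 1 : MvPolynomial (Fin 2) ℂ) = w from rfl]
      rw [show Ideal.Quotient.mk _ (X 0 : MvPolynomial (Fin 2) ℂ) = z from rfl]
      rw [hc]; ring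
    rw [Ideal.mem_span_singleton] at hmem
    obtain ⟨q, hq⟩ := hmem
    have := congrArg (aeval (R := ℂ) ![(0 : Polynomial ℂ), Polynomial.X]) hq
    simp [zero_pow hp.ne_zero] at this
    -- this : X - 0 = (0 - X^2) * aeval q  (roughly)
    set r := aeval (R := ℂ) ![(0 : Polynomial ℂ), Polynomial.X] q with hr
    have hX : (Polynomial.X : Polynomial ℂ) * (1 + Polynomial.X * r) = 0 := by
      linear_combination this
    rcases mul_eq_zero.mp hX with h | h
    · exact Polynomial.X_ne_zero h
    · have := congrArg (Polynomial.eval 0) h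
      simp at this
end
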